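/- arXiv:2004.11754 — 3 statements merged into one kernel-verified Lean document; each statement's English description precedes it below -/
import Mathlib

section
/- Let u : [0, t''] → ℝ be C^1 on (0,t''] with u' > 0 satisfying u'(t₂) ≥ (t₁/t₂)^{n/(n+1)} u'(t₁) for all 0 < t₁ ≤ t₂ ≤ t''. If u(t'') - u(t) ≤ A for all t ∈ (0, t''), then for all t ∈ (0, t''), u'(t) ≤ A / ((n+1)·t^{n/(n+1)}·((t'')^{1/(n+1)} - t^{1/(n+1)})). -/
/-!
Compare `u` with the function `s ↦ u'(t) t^β s^(1-β) / (1-β)`, `β = n/(n+1)`, whose derivative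
is `(t/s)^β u'(t)`. By the Harnack inequality this derivative is at most `u'`, so on `[t, t'']`
the increment of `u`, which is at most `A`, dominates the increment of the comparison function,
`(n+1) u'(t) t^β (t''^(1/(n+1)) - t^(1/(n+1)))`.
-/

open Set

theorem sub_le_sub_of_hasDerivAt_le {f g f' g' : ℝ → ℝ} {a b : ℝ} (hab : a ≤ b)
    (hf : ∀ x ∈ Icc a b, HasDerivAt f (f' x) x) (hg : ∀ x ∈ Icc a b, HasDerivAt g (g' x) x)
    (hle : ∀ x ∈ Ioo a b, f' x ≤ g' x) : f b - f a ≤ g b - g a := by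
  have hderiv : ∀ x ∈ Icc a b, HasDerivAt (g - f) (g' x - f' x) x :=
    fun x hx ↦ (hg x hx).sub (hf x hx)
  have hmono : MonotoneOn (g - f) (Icc a b) := by
    refine monotoneOn_of_hasDerivWithinAt_nonneg (f' := g' - f') (convex_Icc a b)
      (fun x hx ↦ (hderiv x hx).continuousAt.continuousWithinAt) (fun x hx ↦ ?_) (fun x hx ↦ ?_)
    · exact (hderiv x (interior_subset hx)).hasDerivWithinAt
    · rw [interior_Icc] at hx
      exact sub_nonneg.mpr (hle x hx)
  have := hmono (left_mem_Icc.mpr hab) (right_mem_Icc.mpr hab) hab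
  simp only [Pi.sub_apply] at this
  linarith

theorem hasDerivAt_rpow_one_sub_div {β s : ℝ} (hβ : β ≠ 1) (hs : 0 < s) :
    HasDerivAt (fun x ↦ x ^ (1 - β) / (1 - β)) (s ^ (-β)) s := by
  have hβ' : 1 - β ≠ 0 := sub_ne_zero.mpr hβ.symm
  have h := (Real.hasDerivAt_rpow_const (p := 1 - β) (Or.inl hs.ne')).div_const (1 - β)
  rwa [sub_sub_cancel_left, mul_div_cancel_left₀ _ hβ'] at h

theorem mul_rpow_sub_le_sub_of_harnack {u u' : ℝ → ℝ} {β t T : ℝ} (hβ : β ≠ 1) (ht : 0 < t)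
    (htT : t ≤ T) (hu : ∀ s ∈ Icc t T, HasDerivAt u (u' s) s)
    (hharnack : ∀ s ∈ Ioo t T, (t / s) ^ β * u' t ≤ u' s) :
    u' t * t ^ β * ((T ^ (1 - β) - t ^ (1 - β)) / (1 - β)) ≤ u T - u t := by
  have hcomp : ∀ s ∈ Icc t T, HasDerivAt (fun x ↦ u' t * t ^ β * (x ^ (1 - β) / (1 - β)))
      (u' t * t ^ β * s ^ (-β)) s :=
    fun s hs ↦ (hasDerivAt_rpow_one_sub_div hβ (ht.trans_le hs.1)).const_mul _
  have hle : ∀ s ∈ Ioo t T, u' t * t ^ β * s ^ (-β) ≤ u' s := by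
    intro s hs
    have hs0 : 0 < s := ht.trans hs.1
    calc u' t * t ^ β * s ^ (-β) = (t / s) ^ β * u' t := by
          rw [Real.div_rpow ht.le hs0.le, Real.rpow_neg hs0.le]; ring
      _ ≤ u' s := hharnack s hs
  have := sub_le_sub_of_hasDerivAt_le htT hcomp hu hle
  calc u' t * t ^ β * ((T ^ (1 - β) - t ^ (1 - β)) / (1 - β))
      = u' t * t ^ β * (T ^ (1 - β) / (1 - β)) - u' t * t ^ β * (t ^ (1 - β) / (1 - β)) := by
        ring
    _ ≤ u T - u t := this

theorem deriv_upper_bound_of_harnack_general (n : ℕ) (u : ℝ → ℝ) (t'' A : ℝ)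
    (hderiv : ∀ t ∈ Set.Ioc (0 : ℝ) t'', HasDerivAt u (deriv u t) t)
    (hmono : ∀ t₁ t₂ : ℝ, 0 < t₁ → t₁ ≤ t₂ → t₂ ≤ t'' →
      (t₁ / t₂) ^ ((n : ℝ) / ((n : ℝ) + 1)) * deriv u t₁ ≤ deriv u t₂)
    (hbound : ∀ t ∈ Set.Ioo (0 : ℝ) t'', u t'' - u t ≤ A) :
    ∀ t ∈ Set.Ioo (0 : ℝ) t'',
      deriv u t ≤ A / (((n : ℝ) + 1) * t ^ ((n : ℝ) / ((n : ℝ) + 1)) *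
        (t'' ^ ((1 : ℝ) / ((n : ℝ) + 1)) - t ^ ((1 : ℝ) / ((n : ℝ) + 1)))) := by
  intro t ⟨ht, htT⟩
  have hn : (0 : ℝ) < n + 1 := by positivity
  have hβ : (n : ℝ) / (n + 1) ≠ 1 := by rw [Ne, div_eq_one_iff_eq hn.ne']; linarith
  have hα : 1 - (n : ℝ) / (n + 1) = 1 / (n + 1) := by field_simp; ring
  have hincr := mul_rpow_sub_le_sub_of_harnack hβ ht htT.le
    (fun s hs ↦ hderiv s ⟨ht.trans_le hs.1, hs.2⟩)
    (fun s hs ↦ hmono t s ht hs.1.le hs.2.le)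
  rw [hα, div_div_eq_mul_div, div_one] at hincr
  have hgap : 0 < t'' ^ ((1 : ℝ) / (n + 1)) - t ^ ((1 : ℝ) / (n + 1)) :=
    sub_pos.mpr (Real.rpow_lt_rpow ht.le htT (by positivity))
  rw [le_div_iff₀ (by positivity)]
  linarith [hbound t ⟨ht, htT⟩]

/-- Upper speed bound from the integrated Harnack inequality. -/
theorem deriv_upper_bound_of_harnack (n : ℕ) (hn : 1 ≤ n) (u : ℝ → ℝ) (t'' A : ℝ)
    (ht'' : 0 < t'') (hA : 0 < A)
    (hderiv : ∀ t ∈ Set.Ioc (0 : ℝ) t'', HasDerivAt u (deriv u t) t)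
    (hpos : ∀ t ∈ Set.Ioc (0 : ℝ) t'', 0 < deriv u t)
    (hmono : ∀ t₁ t₂ : ℝ, 0 < t₁ → t₁ ≤ t₂ → t₂ ≤ t'' →
      (t₁ / t₂) ^ ((n : ℝ) / ((n : ℝ) + 1)) * deriv u t₁ ≤ deriv u t₂)
    (hbound : ∀ t ∈ Set.Ioo (0 : ℝ) t'', u t'' - u t ≤ A) :
    ∀ t ∈ Set.Ioo (0 : ℝ) t'',
      deriv u t ≤ A / (((n : ℝ) + 1) * t ^ ((n : ℝ) / ((n : ℝ) + 1)) *
        (t'' ^ ((1 : ℝ) / ((n : ℝ) + 1)) - t ^ ((1 : ℝ) / ((n : ℝ) + 1)))) :=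
  deriv_upper_bound_of_harnack_general n u t'' A hderiv hmono hbound
end

section
/- Let d(x) = dist(x, ∂Ω) for a bounded convex domain Ω ⊂ ℝ^n with smooth boundary, and suppose all principal curvatures of ∂Ω are bounded above by λ₀ > 0. Then at any point x in the tubular neighborhood {0 < d(x) < 1/λ₀} where d is smooth, the function φ = -L log d (L > 0) satisfies det D²φ / (1+|Dφ|²)^{(n+1)/2} ≤ (1/L)·∏_{i=1}^{n-1} λᵢ(π(x))/(1 - λᵢ(π(x)) d(x)), where π(x) ∈ ∂Ω is the nearest boundary point and λᵢ are the principal curvatures of ∂Ω at π(x). -/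
/-!
In the adapted frame `Dd = eₙ`, so `D²φ = (L/d²) eₙ ⊗ eₙ - (L/d) D²d` is diagonal with entries
`(L/d) λᵢ/(1 - λᵢ d)` and `L/d²`. Its determinant is `(1/L) (L/d)^(n+1) ∏ᵢ λᵢ/(1 - λᵢ d)`, while
`1 + |Dφ|² = 1 + (L/d)²` and `(L/d)^(n+1) ≤ (1 + (L/d)²)^((n+1)/2)`. The product is nonnegative
because `λᵢ d ≤ λ₀ d < 1`, so the quotient is at most `(1/L) ∏ᵢ λᵢ/(1 - λᵢ d)`.
-/

open Matrix

theorem pow_le_one_add_sq_rpow (t : ℝ) (k : ℕ) : t ^ k ≤ (1 + t ^ 2) ^ ((k : ℝ) / 2) :=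
  calc t ^ k ≤ |t| ^ k := (le_abs_self _).trans (abs_pow t k).le
    _ = (|t| ^ 2) ^ ((k : ℝ) / 2) := by
      rw [← Real.rpow_natCast_mul (abs_nonneg t), ← Real.rpow_natCast]; ring_nf
    _ ≤ (1 + t ^ 2) ^ ((k : ℝ) / 2) := by
      rw [sq_abs]; exact Real.rpow_le_rpow (sq_nonneg t) (by linarith) (by positivity)

theorem mul_pow_succ_div_one_add_sq_rpow_le {a : ℝ} (ha : 0 ≤ a) (t : ℝ) (k : ℕ) :
    a * t ^ (k + 1) / (1 + t ^ 2) ^ (((k : ℝ) + 1) / 2) ≤ a := by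
  rw [div_le_iff₀ (by positivity)]
  have := pow_le_one_add_sq_rpow t (k + 1)
  push_cast at this
  exact mul_le_mul_of_nonneg_left this ha

theorem dite_val_lt_eq_snoc {α : Type*} {m : ℕ} (f : Fin m → α) (x : α) :
    (fun i : Fin (m + 1) => if h : (i : ℕ) < m then f ⟨i, h⟩ else x) = Fin.snoc f x := by
  funext i
  induction i using Fin.lastCases <;> simp

theorem ite_val_eq_eq_single_last {R : Type*} [Zero R] [One R] (m : ℕ) :
    (fun i : Fin (m + 1) => if (i : ℕ) = m then (1 : R) else 0) = Pi.single (Fin.last m) 1 := by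
  funext i
  simp [Pi.single_apply, Fin.ext_iff]

theorem smul_vecMulVec_single_last_sub_smul_diagonal_snoc {R : Type*} [CommRing R] {m : ℕ}
    (a b : R) (κ : Fin m → R) :
    a • vecMulVec (Pi.single (Fin.last m) 1) (Pi.single (Fin.last m) 1) -
        b • diagonal (Fin.snoc κ 0) = diagonal (Fin.snoc (fun i => -(b * κ i)) a) := by
  ext i j
  induction i using Fin.lastCases <;> induction j using Fin.lastCases <;>
    simp [vecMulVec_apply, diagonal_apply, eq_comm (a := Fin.last m), neg_ite]

theorem det_diagonal_snoc {R : Type*} [CommRing R] {m : ℕ} (κ : Fin m → R) (a : R) :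
    (diagonal (Fin.snoc κ a)).det = (∏ i, κ i) * a := by
  simp [det_diagonal, Fin.prod_univ_castSucc]

theorem sum_sq_mul_single {ι R : Type*} [Fintype ι] [DecidableEq ι] [CommRing R] (c : R) (j : ι) :
    ∑ i, (c * (Pi.single j 1 : ι → R) i) ^ 2 = c ^ 2 := by
  simp [Pi.single_apply]

theorem div_one_sub_mul_pos {κ κ₀ d : ℝ} (hκ : 0 < κ) (hκκ₀ : κ ≤ κ₀) (hd : 0 ≤ d)
    (hκ₀d : κ₀ * d < 1) : 0 < κ / (1 - κ * d) :=
  div_pos hκ (by nlinarith)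

/-- The barrier computation: for `φ = -L log d`, in the adapted orthonormal frame where
`Dd = e_n` and `D²d = diag(-λᵢ/(1-λᵢ d), 0)`, one has
`det D²φ / (1+|Dφ|²)^{(n+1)/2} ≤ (1/L) ∏ᵢ λᵢ/(1-λᵢ d)`. -/
theorem log_dist_barrier_estimate (n : ℕ) (hn : 1 ≤ n)
    (L d lam₀ : ℝ) (hL : 0 < L) (hd : 0 < d) (hlam₀ : 0 < lam₀) (hd' : d < 1 / lam₀)
    (lam : Fin (n - 1) → ℝ) (hlam : ∀ i, 0 < lam i ∧ lam i ≤ lam₀)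
    (Dd : Fin n → ℝ) (hDd : Dd = fun i : Fin n => if (i : ℕ) = n - 1 then (1 : ℝ) else 0)
    (D2d : Matrix (Fin n) (Fin n) ℝ)
    (hD2d : D2d = Matrix.diagonal (fun i : Fin n =>
      if h : (i : ℕ) < n - 1 then -lam ⟨(i : ℕ), h⟩ / (1 - lam ⟨(i : ℕ), h⟩ * d) else (0 : ℝ)))
    (Dφ : Fin n → ℝ) (hDφ : Dφ = fun i => -(L / d) * Dd i)
    (D2φ : Matrix (Fin n) (Fin n) ℝ)
    (hD2φ : D2φ = (L / d ^ 2) • Matrix.of (fun i j => Dd i * Dd j) - (L / d) • D2d) :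
    D2φ.det / (1 + ∑ i, (Dφ i) ^ 2) ^ (((n : ℝ) + 1) / 2) ≤
      (1 / L) * ∏ i, lam i / (1 - lam i * d) := by
  obtain ⟨m, rfl⟩ : ∃ m, n = m + 1 := ⟨n - 1, by omega⟩
  have hlam₀d : lam₀ * d < 1 := by rwa [lt_div_iff₀ hlam₀, mul_comm] at hd'
  have hP : 0 ≤ ∏ i, lam i / (1 - lam i * d) := Finset.prod_nonneg fun i _ =>
    (div_one_sub_mul_pos (hlam i).1 (hlam i).2 hd.le hlam₀d).le
  have hDd' : Dd = Pi.single (Fin.last m) 1 := hDd.trans (ite_val_eq_eq_single_last m)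
  have hD2d' : D2d = diagonal (Fin.snoc (fun i => -lam i / (1 - lam i * d)) 0) :=
    hD2d.trans <| congrArg diagonal <|
      dite_val_lt_eq_snoc (m := m) (fun i => -lam i / (1 - lam i * d)) 0
  have hdet :
      D2φ.det = 1 / L * (∏ i : Fin m, lam i / (1 - lam i * d)) * (L / d) ^ (m + 1 + 1) := by
    rw [hD2φ, hD2d', hDd', ← vecMulVec, smul_vecMulVec_single_last_sub_smul_diagonal_snoc,
      det_diagonal_snoc]
    simp only [neg_div, mul_neg, neg_neg, Finset.prod_mul_distrib, Finset.prod_const,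
      Finset.card_univ, Fintype.card_fin]
    rw [show L / d ^ 2 = 1 / L * (L / d) ^ 2 by field_simp]
    ring
  have hgrad : ∑ i, Dφ i ^ 2 = (L / d) ^ 2 := by
    rw [hDφ, hDd']
    simpa only [neg_sq] using sum_sq_mul_single (-(L / d)) (Fin.last m)
  rw [hdet, hgrad]
  exact mul_pow_succ_div_one_add_sq_rpow_le (mul_nonneg (by positivity) hP) _ _
end

section
/- Let U ⊂ ℝ^{n+1} be a convex open set containing points (x₀, a_k) with a_k → +∞ and (x₀, b_k) with b_k → -∞ for some fixed x₀ ∈ ℝ^n. Then for every (x, s) ∈ U and every t ∈ ℝ, the point (x, t) ∈ U; that is, U is invariant under all vertical translations. -/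
open Filter Topology

/-!
Along a far point `x₀ + a • v` of `U`, the convex combinations
`(1 - t / a) • p + (t / a) • (x₀ + a • v) = p + (t / a) • (x₀ - p) + t • v` lie in `U` and tend
to `p + t • v` as `a → ∞`, so `p + t • v ∈ closure U` for every `t ≥ 0`. For open convex `U` the
midpoint of `p ∈ U` and `p + 2t • v ∈ closure U` is then in `U`. Applied to `v = (0, 1)` and to
`v = (0, -1)`, this moves any point of `U` vertically as far as we like in both directions.
-/

section RecessionDirection

variable {E : Type*} [AddCommGroup E] [Module ℝ E] [TopologicalSpace E]
  [IsTopologicalAddGroup E] [ContinuousSMul ℝ E]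
  {U : Set E} {x₀ v p : E} {ι : Type*} {l : Filter ι} [l.NeBot] {a : ι → ℝ}

theorem Convex.add_smul_mem_closure_of_tendsto_atTop (hU : Convex ℝ U)
    (ha : Tendsto a l atTop) (haU : ∀ i, x₀ + a i • v ∈ U) (hp : p ∈ U) {t : ℝ} (ht : 0 ≤ t) :
    p + t • v ∈ closure U := by
  have hw : Tendsto (fun i => t / a i) l (𝓝 0) := tendsto_const_nhds.div_atTop ha
  have hcombo : ∀ᶠ i in l, (1 - t / a i) • p + (t / a i) • (x₀ + a i • v)
      = p + (t / a i) • (x₀ - p) + t • v := by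
    filter_upwards [ha.eventually_gt_atTop 0] with i hai
    rw [smul_add, smul_smul, div_mul_cancel₀ t hai.ne']
    module
  have hlim : Tendsto (fun i => (1 - t / a i) • p + (t / a i) • (x₀ + a i • v)) l
      (𝓝 (p + t • v)) := by
    refine Tendsto.congr' (EventuallyEq.symm hcombo) ?_
    simpa using ((hw.smul_const (x₀ - p)).const_add p).add_const (t • v)
  refine mem_closure_of_tendsto hlim ?_
  filter_upwards [ha.eventually_ge_atTop t, ha.eventually_gt_atTop 0] with i hti hai
  have hw₀ : 0 ≤ t / a i := div_nonneg ht hai.le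
  have hw₁ : t / a i ≤ 1 := (div_le_one hai).2 hti
  exact hU hp (haU i) (by linarith) hw₀ (by ring)

theorem Convex.add_smul_mem_of_isOpen_of_tendsto_atTop (hU : Convex ℝ U) (hUo : IsOpen U)
    (ha : Tendsto a l atTop) (haU : ∀ i, x₀ + a i • v ∈ U) (hp : p ∈ U) {t : ℝ} (ht : 0 ≤ t) :
    p + t • v ∈ U := by
  have hfar : p + (2 * t) • v ∈ closure U :=
    hU.add_smul_mem_closure_of_tendsto_atTop ha haU hp (by linarith)
  have hmid := hU.combo_interior_closure_mem_interior (hUo.interior_eq.symm ▸ hp) hfar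
    (a := 1 / 2) (b := 1 / 2) (by norm_num) (by norm_num) (by norm_num)
  rwa [hUo.interior_eq, show (1 / 2 : ℝ) • p + (1 / 2 : ℝ) • (p + (2 * t) • v) = p + t • v by
    module] at hmid

end RecessionDirection

/-- A convex open set in `ℝⁿ × ℝ` containing points with arbitrarily large and
arbitrarily negative last coordinate on a fixed vertical line is invariant under
all vertical translations. -/
theorem convex_open_vertical_invariant (n : ℕ)
    (U : Set (EuclideanSpace ℝ (Fin n) × ℝ)) (hUo : IsOpen U) (hUc : Convex ℝ U)
    (x₀ : EuclideanSpace ℝ (Fin n)) (a b : ℕ → ℝ)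
    (ha : Tendsto a atTop atTop) (hb : Tendsto b atTop atBot)
    (haU : ∀ k, (x₀, a k) ∈ U) (hbU : ∀ k, (x₀, b k) ∈ U) :
    ∀ x : EuclideanSpace ℝ (Fin n), ∀ s : ℝ, (x, s) ∈ U → ∀ t : ℝ, (x, t) ∈ U := by
  intro x s hs t
  rcases le_total s t with hst | hts
  · have haU' : ∀ k, (x₀, 0) + a k • ((0, 1) : EuclideanSpace ℝ (Fin n) × ℝ) ∈ U := by
      simpa using haU
    simpa using hUc.add_smul_mem_of_isOpen_of_tendsto_atTop hUo ha haU' hs (sub_nonneg.2 hst)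
  · have hbU' : ∀ k, (x₀, 0) + (-b k) • ((0, -1) : EuclideanSpace ℝ (Fin n) × ℝ) ∈ U := by
      simpa using hbU
    simpa using hUc.add_smul_mem_of_isOpen_of_tendsto_atTop hUo (tendsto_neg_atBot_atTop.comp hb)
      hbU' hs (sub_nonneg.2 hts)
end
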